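/- Let G be an infinite, connected, locally finite simple graph on a vertex set V, and let z : V → ℕ be a sandpile configuration with finite support. If L₁ and L₂ are two legal toppling sequences from z whose final configurations are stable, then those final configurations coincide: the final stable configuration depends solely on the initial configuration, independently of the order in which the topplings are performed. -/

import Mathlib

/-!
Toppling conserves chips: after a legal sequence `L`, vertex `v` holds its initial chips, plus one
per toppling of a neighbour, minus `deg v` per toppling of `v` itself. So the final configuration
depends only on the multiset of toppled vertices. Least action: if `L₂` stabilises `z`, every legal
sequence `L₁` from `z` is a sub-multiset of `L₂`. Otherwise take the first vertex `i` of `L₁` whose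
count would exceed its count in `L₂`; at that moment `i` is unstable, and at the end of `L₂` it has
toppled as often while its neighbours have toppled at least as often, so it is still unstable.
Two stabilising sequences are therefore permutations of each other.
-/

variable {V : Type*}

def topple (G : SimpleGraph V) [G.LocallyFinite] [DecidableEq V] [DecidableRel G.Adj]
    (z : V → ℕ) (i : V) : V → ℕ :=
  fun j => if j = i then z i - G.degree i else if G.Adj i j then z j + 1 else z j

def LegalSeq (G : SimpleGraph V) [G.LocallyFinite] [DecidableEq V] [DecidableRel G.Adj] :
    (V → ℕ) → List V → Prop
  | _, [] => True
  | z, i :: L => G.degree i ≤ z i ∧ LegalSeq G (topple G z i) L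

def IsStable (G : SimpleGraph V) [G.LocallyFinite] (z : V → ℕ) : Prop :=
  ∀ v, z v < G.degree v

section Toppling

variable (G : SimpleGraph V) [G.LocallyFinite] [DecidableEq V] [DecidableRel G.Adj]

lemma legalSeq_append {z : V → ℕ} {L M : List V} :
    LegalSeq G z (L ++ M) ↔ LegalSeq G z L ∧ LegalSeq G (L.foldl (topple G) z) M := by
  induction L generalizing z with
  | nil => simp [LegalSeq]
  | cons i L ih => simp [LegalSeq, ih, and_assoc]

lemma topple_add_degree_mul {z : V → ℕ} {i : V} (hi : G.degree i ≤ z i) (v : V) :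
    topple G z i v + G.degree v * (if i = v then 1 else 0) = z v + if G.Adj i v then 1 else 0 := by
  by_cases hiv : i = v
  · subst hiv
    simp [topple, hi]
  · by_cases hadj : G.Adj i v <;> simp [topple, Ne.symm hiv, hiv, hadj]

lemma foldl_topple_add_degree_mul_count {z : V → ℕ} {L : List V} (hL : LegalSeq G z L) (v : V) :
    L.foldl (topple G) z v + G.degree v * L.count v = z v + L.countP (G.Adj · v) := by
  induction L generalizing z with
  | nil => simp
  | cons i L ih =>
    obtain ⟨hi, hL⟩ := hL
    have step := topple_add_degree_mul G hi v
    have rest := ih hL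
    simp only [List.foldl_cons, List.count_cons, List.countP_cons, beq_iff_eq, decide_eq_true_eq,
      Nat.mul_add] at rest ⊢
    omega

lemma foldl_topple_eq_of_perm {z : V → ℕ} {L₁ L₂ : List V} (h₁ : LegalSeq G z L₁)
    (h₂ : LegalSeq G z L₂) (hperm : L₁.Perm L₂) :
    L₁.foldl (topple G) z = L₂.foldl (topple G) z := by
  funext v
  have e₁ := foldl_topple_add_degree_mul_count G h₁ v
  have e₂ := foldl_topple_add_degree_mul_count G h₂ v
  rw [hperm.count_eq, hperm.countP_eq] at e₁
  omega

lemma LegalSeq.subperm_of_isStable {z : V → ℕ} {L₁ L₂ : List V} (h₁ : LegalSeq G z L₁)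
    (h₂ : LegalSeq G z L₂) (hs₂ : IsStable G (L₂.foldl (topple G) z)) : L₁.Subperm L₂ := by
  induction L₁ using List.reverseRecOn with
  | nil => exact List.nil_subperm
  | append_singleton P i ih =>
    obtain ⟨hP, hi, -⟩ := (legalSeq_append G).1 h₁
    have hsub := ih hP
    have hlt : P.count i < L₂.count i := by
      by_contra! hle
      have hcount : P.count i = L₂.count i := le_antisymm (hsub.count_le i) hle
      have eP := foldl_topple_add_degree_mul_count G hP i
      rw [hcount] at eP
      have e₂ := foldl_topple_add_degree_mul_count G h₂ i
      have hnbrs := hsub.countP_le (G.Adj · i)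
      have hstable := hs₂ i
      omega
    refine List.subperm_ext_iff.2 fun x _ => ?_
    by_cases hx : x = i
    · subst hx
      simpa using hlt
    · simpa [List.count_append, List.count_singleton, Ne.symm hx] using hsub.count_le x

end Toppling

theorem abelian_infinite_general [DecidableEq V]
    (G : SimpleGraph V) [G.LocallyFinite] [DecidableRel G.Adj]
    (z : V → ℕ)
    (L₁ L₂ : List V) (h₁ : LegalSeq G z L₁) (h₂ : LegalSeq G z L₂)
    (hs₁ : ∀ v, L₁.foldl (topple G) z v < G.degree v)
    (hs₂ : ∀ v, L₂.foldl (topple G) z v < G.degree v) :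
    L₁.foldl (topple G) z = L₂.foldl (topple G) z :=
  foldl_topple_eq_of_perm G h₁ h₂
    ((h₁.subperm_of_isStable G h₂ hs₂).antisymm (h₂.subperm_of_isStable G h₁ hs₁))

/-- Abelian property on infinite graphs: on an infinite, connected, locally
finite simple graph, if two legal toppling sequences from a finitely supported
configuration `z` both end in a stable configuration, then the two final stable
configurations coincide. -/
theorem abelian_infinite [Infinite V] [DecidableEq V]
    (G : SimpleGraph V) [G.LocallyFinite] [DecidableRel G.Adj]
    (hconn : G.Connected) (z : V → ℕ) (hz : (Function.support z).Finite)
    (L₁ L₂ : List V) (h₁ : LegalSeq G z L₁) (h₂ : LegalSeq G z L₂)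
    (hs₁ : ∀ v, L₁.foldl (topple G) z v < G.degree v)
    (hs₂ : ∀ v, L₂.foldl (topple G) z v < G.degree v) :
    L₁.foldl (topple G) z = L₂.foldl (topple G) z :=
  abelian_infinite_general G z L₁ L₂ h₁ h₂ hs₁ hs₂
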